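/- arXiv:2010.11479 — 7 statements merged into one kernel-verified Lean document; each statement's English description precedes it below -/
import Mathlib

section
/- For all natural numbers j, n ≥ 1 and all real r with 0 ≤ r ≤ 1, we have ∑_{i=1}^n (i+r)^j ≤ (n+r)^{j+1}/(j+1) + (n+r)^j/2 + j·(n+r)^{j-1}/12. -/
/-!
Write `F_j(x) = x^(j+1)/(j+1) + x^j/2 + j x^(j-1)/12`. Like the Bernoulli polynomials, these form an
Appell sequence, `F_(j+1)' = (j+1) F_j`, so the defect `g_j(x) = F_j(x+1) - F_j(x) - (x+1)^j` satisfies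
`g_(j+1)' = (j+1) g_j`. Since `g_0 = 0` and `g_j(0) ≥ 0` (for `j ≥ 2`, `12 (j+1) g_j(0) = (j-2)(j-3)`),
induction on `j` shows that `g_j` is nonnegative on `[0, ∞)`. Telescoping over `x = i + r` then bounds
the sum by `F_j(n+r) - F_j(r) ≤ F_j(n+r)`.
-/

open Set

noncomputable def faulhaberBound (j : ℕ) (x : ℝ) : ℝ :=
  x ^ (j + 1) / (j + 1) + x ^ j / 2 + j * x ^ (j - 1) / 12

noncomputable def faulhaberGap (j : ℕ) (x : ℝ) : ℝ :=
  faulhaberBound j (x + 1) - faulhaberBound j x - (x + 1) ^ j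

lemma faulhaberBound_nonneg (j : ℕ) {x : ℝ} (hx : 0 ≤ x) : 0 ≤ faulhaberBound j x := by
  unfold faulhaberBound
  positivity

lemma hasDerivAt_faulhaberBound_succ (j : ℕ) (x : ℝ) :
    HasDerivAt (faulhaberBound (j + 1)) ((j + 1) * faulhaberBound j x) x := by
  have h := (((hasDerivAt_pow (j + 2) x).div_const ((j : ℝ) + 2)).add
    ((hasDerivAt_pow (j + 1) x).div_const 2)).add
      (((hasDerivAt_pow j x).const_mul ((j : ℝ) + 1)).div_const 12)
  have hf : faulhaberBound (j + 1) =
      fun y : ℝ => y ^ (j + 2) / ((j : ℝ) + 2) + y ^ (j + 1) / 2 + ((j : ℝ) + 1) * y ^ j / 12 := by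
    funext y
    simp only [faulhaberBound, Nat.add_sub_cancel]
    push_cast
    ring
  rw [hf]
  refine h.congr_deriv ?_
  have hj : ((j : ℝ) + 1) ≠ 0 := by positivity
  rw [show j + 2 - 1 = j + 1 by omega, Nat.add_sub_cancel, faulhaberBound]
  push_cast
  field_simp

lemma hasDerivAt_faulhaberGap_succ (j : ℕ) (x : ℝ) :
    HasDerivAt (faulhaberGap (j + 1)) ((j + 1) * faulhaberGap j x) x := by
  have hshift := (hasDerivAt_faulhaberBound_succ j (x + 1)).comp x ((hasDerivAt_id x).add_const 1)
  have hpow := ((hasDerivAt_id x).add_const 1).pow (j + 1)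
  refine ((hshift.sub (hasDerivAt_faulhaberBound_succ j x)).sub hpow).congr_deriv ?_
  simp only [faulhaberGap, id, Nat.add_sub_cancel]
  push_cast
  ring

lemma faulhaberGap_nonneg_at_zero (j : ℕ) : 0 ≤ faulhaberGap j 0 := by
  rcases j with _ | _ | k
  · norm_num [faulhaberGap, faulhaberBound]
  · norm_num [faulhaberGap, faulhaberBound]
  · have hk : (0 : ℝ) ≤ k * (k - 1) := by
      rcases k with _ | k
      · simp
      · push_cast
        nlinarith
    have hgap : faulhaberGap (k + 2) 0 = k * (k - 1) / (12 * (k + 3)) := by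
      simp only [faulhaberGap, faulhaberBound, zero_add, one_pow, Nat.add_one_sub_one,
        ne_eq, Nat.succ_ne_zero, not_false_eq_true, zero_pow, zero_div, mul_zero, sub_zero]
      push_cast
      field_simp
      ring
    rw [hgap]
    exact div_nonneg hk (by positivity)

lemma faulhaberGap_nonneg (j : ℕ) {x : ℝ} (hx : 0 ≤ x) : 0 ≤ faulhaberGap j x := by
  induction j generalizing x with
  | zero => simp [faulhaberGap, faulhaberBound]
  | succ j ih =>
    have hmono : MonotoneOn (faulhaberGap (j + 1)) (Ici 0) := by
      refine monotoneOn_of_hasDerivWithinAt_nonneg (convex_Ici 0)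
        (fun y _ => (hasDerivAt_faulhaberGap_succ j y).continuousAt.continuousWithinAt)
        (fun y _ => (hasDerivAt_faulhaberGap_succ j y).hasDerivWithinAt) fun y hy => ?_
      rw [interior_Ici] at hy
      exact mul_nonneg (by positivity) (ih (le_of_lt hy))
    exact (faulhaberGap_nonneg_at_zero (j + 1)).trans (hmono self_mem_Ici hx hx)

theorem generalized_faulhaber_inequality_general (j n : ℕ)
    (r : ℝ) (hr0 : 0 ≤ r) :
    ∑ i ∈ Finset.Icc 1 n, ((i : ℝ) + r) ^ j ≤
      ((n : ℝ) + r) ^ (j + 1) / (j + 1) + ((n : ℝ) + r) ^ j / 2 +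
        (j : ℝ) * ((n : ℝ) + r) ^ (j - 1) / 12 := by
  change _ ≤ faulhaberBound j (n + r)
  induction n with
  | zero => simpa using faulhaberBound_nonneg j hr0
  | succ n ih =>
    have hstep := faulhaberGap_nonneg j (x := n + r) (by positivity)
    rw [Finset.sum_Icc_succ_top (by omega), Nat.cast_succ, add_right_comm]
    unfold faulhaberGap at hstep
    linarith

/-- Generalized Faulhaber inequality. -/
theorem generalized_faulhaber_inequality (j n : ℕ) (hj : 1 ≤ j) (hn : 1 ≤ n)
    (r : ℝ) (hr0 : 0 ≤ r) (hr1 : r ≤ 1) :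
    ∑ i ∈ Finset.Icc 1 n, ((i : ℝ) + r) ^ j ≤
      ((n : ℝ) + r) ^ (j + 1) / (j + 1) + ((n : ℝ) + r) ^ j / 2 +
        (j : ℝ) * ((n : ℝ) + r) ^ (j - 1) / 12 :=
  generalized_faulhaber_inequality_general j n r hr0
end

section
/- For every real δ with 0 < δ < 1, the bracketing number of the unit square satisfies N_{[ ]}(2, δ) ≤ 2·log(2)·δ^{-2} + 3·(log(2)+1)·δ^{-1} − (13/9·log(2) − 1). -/
open MeasureTheory

/-- The bracketing number `N_{[ ]}(d, δ)`: the smallest number of closed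
axis-parallel boxes `[x, y]` with `x, y ∈ [0,1]^d`,
`λ_d([0,y]) - λ_d([0,x]) ≤ δ` (i.e. `∏ y_j - ∏ x_j ≤ δ`), whose union
contains `[0,1]^d`. -/
noncomputable def bracketingNumber (d : ℕ) (δ : ℝ) : ℕ :=
  sInf {n : ℕ | ∃ x y : Fin n → (Fin d → ℝ),
    (∀ i, x i ∈ Set.Icc (0 : Fin d → ℝ) 1 ∧ y i ∈ Set.Icc (x i) 1 ∧
      (∏ j, y i j) - (∏ j, x i j) ≤ δ) ∧
    Set.Icc (0 : Fin d → ℝ) 1 ⊆ ⋃ i, Set.Icc (x i) (y i)}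


/-! Cut the square into `M = ⌈2/δ⌉` columns of width `1/M`. On a column `[a, b] × [0, 1]`
the brackets `[(a, h k), (b, h (k + 1))]` with `b h (k + 1) - a h k = δ`, `h 0 = 0` have heights
`h k = δ/(b - a) · (1 - (a/b)^k)`. For the `j`-th column `a/b = 1 - 1/j ≤ exp (-1/j)`, so
`⌈j log (δM/(δM - 1))⌉` of them reach height `1`, and `δM ≥ 2` bounds that logarithm by `log 2`.
Summing over the columns uses `⌈cj⌉ ≤ cj + 1` when `δ ≤ 1/2` and `⌈cj⌉ ≤ j` otherwise. -/

open Set Real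

def IsBracketCover {d : ℕ} {ι : Type*} (δ : ℝ) (s : Set (Fin d → ℝ))
    (x y : ι → Fin d → ℝ) : Prop :=
  (∀ i, x i ∈ Icc 0 1 ∧ y i ∈ Icc (x i) 1 ∧ (∏ j, y i j) - (∏ j, x i j) ≤ δ) ∧
    s ⊆ ⋃ i, Icc (x i) (y i)

namespace IsBracketCover

variable {d : ℕ} {δ : ℝ}

theorem sigma {ι : Type*} {κ : ι → Type*} {s : ι → Set (Fin d → ℝ)}
    {x y : ∀ i, κ i → Fin d → ℝ} (h : ∀ i, IsBracketCover δ (s i) (x i) (y i)) :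
    IsBracketCover δ (⋃ i, s i) (fun p : Σ i, κ i => x p.1 p.2) (fun p => y p.1 p.2) := by
  refine ⟨fun p => (h p.1).1 p.2, iUnion_subset fun i w hw => ?_⟩
  obtain ⟨k, hk⟩ := mem_iUnion.1 ((h i).2 hw)
  exact mem_iUnion.2 ⟨⟨i, k⟩, hk⟩

theorem bracketingNumber_le {ι : Type*} [Fintype ι] {s : Set (Fin d → ℝ)}
    {x y : ι → Fin d → ℝ} (h : IsBracketCover δ s x y) (hs : Icc 0 1 ⊆ s) :
    bracketingNumber d δ ≤ Fintype.card ι := by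
  let e := (Fintype.equivFin ι).symm
  refine Nat.sInf_le ⟨x ∘ e, y ∘ e, fun i => h.1 (e i), hs.trans (h.2.trans ?_)⟩
  exact (e.iSup_comp (g := fun i => Icc (x i) (y i))).ge

end IsBracketCover

theorem Nat.exists_le_and_le_succ {α : Type*} [LinearOrder α] (g : ℕ → α) {a : α}
    (h0 : g 0 ≤ a) : ∀ {n : ℕ}, 0 < n → a ≤ g n → ∃ k < n, g k ≤ a ∧ a ≤ g (k + 1)
  | n + 1, _, hn => by
    by_cases hgn : g n ≤ a
    · exact ⟨n, n.lt_succ_self, hgn, hn⟩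
    · rcases Nat.eq_zero_or_pos n with rfl | hpos
      · exact absurd h0 hgn
      · obtain ⟨k, hk, hak⟩ := exists_le_and_le_succ g h0 hpos (not_le.1 hgn).le
        exact ⟨k, hk.trans n.lt_succ_self, hak⟩

theorem one_le_mul_one_sub_pow {s m : ℝ} {n : ℕ} (hs : 1 < s) (hm : 1 ≤ m)
    (hn : log (s / (s - 1)) * m ≤ n) : 1 ≤ s * (1 - (1 - m⁻¹) ^ n) := by
  have hs0 : 0 < s - 1 := sub_pos.2 hs
  have hbase : (1 - m⁻¹) ^ n ≤ exp (-m⁻¹) ^ n :=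
    pow_le_pow_left₀ (sub_nonneg.2 (inv_le_one_of_one_le₀ hm))
      (by linarith [add_one_le_exp (-m⁻¹)]) n
  have hpow : exp (-m⁻¹) ^ n ≤ (s - 1) / s := by
    rw [← exp_nat_mul, ← inv_div, ← exp_log (by positivity : 0 < s / (s - 1)), ← exp_neg]
    gcongr
    rw [mul_neg, neg_le_neg_iff, ← div_eq_mul_inv, le_div_iff₀ (by linarith)]
    simpa using hn
  have hs_mul : s * (1 - (s - 1) / s) = 1 := by field_simp; ring
  nlinarith

theorem exists_column_cover {δ a b : ℝ} {n : ℕ} (ha : 0 ≤ a) (hab : a < b) (hb : b ≤ 1)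
    (hn : 1 ≤ δ / (b - a) * (1 - (a / b) ^ n)) :
    ∃ x y : Fin n → Fin 2 → ℝ, IsBracketCover δ {w | w 0 ∈ Icc a b ∧ w 1 ∈ Icc 0 1} x y := by
  set H := δ / (b - a)
  set q := a / b
  have hb0 : 0 < b := ha.trans_lt hab
  have hq0 : 0 ≤ q := div_nonneg ha hb0.le
  have hq1 : q < 1 := (div_lt_one hb0).2 hab
  have hqn : ∀ k, q ^ k ≤ 1 := fun k => pow_le_one₀ hq0 hq1.le
  have hH : 1 ≤ H := by
    have h1 : 0 ≤ 1 - q ^ n := sub_nonneg.2 (hqn n)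
    have H0 : 0 ≤ H := by nlinarith
    exact hn.trans (mul_le_of_le_one_right H0 (by linarith [pow_nonneg hq0 n]))
  have hδ : b - a ≤ δ := by rwa [le_div_iff₀ (sub_pos.2 hab), one_mul] at hH
  set h : ℕ → ℝ := fun k => min 1 (H * (1 - q ^ k))
  have h_nonneg : ∀ k, 0 ≤ h k := fun k => le_min zero_le_one (by nlinarith [hqn k])
  have h_mono : ∀ k, h k ≤ h (k + 1) := fun k => min_le_min_left _ <|
    mul_le_mul_of_nonneg_left (by linarith [pow_le_pow_of_le_one hq0 hq1.le (k.le_add_right 1)])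
      (zero_le_one.trans hH)
  have h_step : ∀ k, b * h (k + 1) - a * h k ≤ δ := by
    intro k
    by_cases hk : 1 ≤ H * (1 - q ^ k)
    · have : h k = 1 := min_eq_left hk
      nlinarith [min_le_left 1 (H * (1 - q ^ (k + 1)))]
    · have : h k = H * (1 - q ^ k) := min_eq_right (not_le.1 hk).le
      have hid : b * (H * (1 - q ^ (k + 1))) - a * (H * (1 - q ^ k)) = δ := by
        have : b - a ≠ 0 := (sub_pos.2 hab).ne'
        simp only [H, q, pow_succ]
        field_simp
        ring
      nlinarith [min_le_right 1 (H * (1 - q ^ (k + 1)))]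
  refine ⟨fun k => ![a, h k], fun k => ![b, h (k + 1)], fun k => ⟨?_, ?_, ?_⟩, ?_⟩
  · simp [Pi.le_def, Fin.forall_fin_two, ha, h_nonneg, hab.le.trans hb, h]
  · simp [Pi.le_def, Fin.forall_fin_two, hab.le, h_mono, hb, h]
  · simpa [Fin.prod_univ_two] using h_step k
  · rintro w ⟨⟨hwa, hwb⟩, hw0, hw1⟩
    have hn0 : 0 < n := Nat.pos_of_ne_zero fun h0 => by simp [h0] at hn; linarith
    obtain ⟨k, hk, hlo, hhi⟩ := Nat.exists_le_and_le_succ h (a := w 1) (by simpa [h] using hw0)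
      hn0 (by simpa [h, min_eq_left hn] using hw1)
    refine mem_iUnion.2 ⟨⟨k, hk⟩, ?_, ?_⟩ <;>
      simp [Pi.le_def, Fin.forall_fin_two, hwa, hwb, hlo, hhi]

theorem bracketingNumber_two_le_sum_ceil {δ : ℝ} {M : ℕ} (hδM : 1 < δ * M) :
    bracketingNumber 2 δ ≤ ∑ i : Fin M, ⌈log (δ * M / (δ * M - 1)) * (i + 1)⌉₊ := by
  set c := log (δ * M / (δ * M - 1))
  have hM : 0 < M := Nat.pos_of_ne_zero fun h => by simp [h] at hδM; linarith
  have hM' : (0 : ℝ) < M := Nat.cast_pos.2 hM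
  have hcol : ∀ i : Fin M, ∃ x y : Fin ⌈c * (i + 1)⌉₊ → Fin 2 → ℝ,
      IsBracketCover δ {w | w 0 ∈ Icc ((i : ℝ) / M) ((i + 1) / M) ∧ w 1 ∈ Icc 0 1} x y := by
    intro i
    have hiM : (i : ℝ) + 1 ≤ M := by exact_mod_cast i.isLt
    apply exists_column_cover (by positivity) (by gcongr; linarith) (div_le_one_of_le₀ hiM hM'.le)
    have hwidth : δ / ((i + 1) / M - i / M) = δ * M := by field_simp; ring
    have hratio : (i / M) / ((i + 1) / M) = 1 - ((i : ℝ) + 1)⁻¹ := by field_simp; ring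
    rw [hwidth, hratio]
    exact one_le_mul_one_sub_pow hδM (by linarith [(i : ℕ).cast_nonneg (α := ℝ)]) (Nat.le_ceil _)
  choose x y hxy using hcol
  have hcover := (IsBracketCover.sigma hxy).bracketingNumber_le ?_
  · simpa [Fintype.card_sigma] using hcover
  · rintro w ⟨hw0, hw1⟩
    obtain ⟨i, hi, hlo, hhi⟩ := Nat.exists_le_and_le_succ (fun i : ℕ => (i : ℝ) / M)
      (a := w 0) (by simpa using hw0 0) hM (by simpa [hM'.ne'] using hw1 0)
    exact mem_iUnion.2 ⟨⟨i, hi⟩, ⟨hlo, by simpa using hhi⟩, hw0 1, hw1 1⟩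

theorem sum_fin_cast_add_one (M : ℕ) : ∑ i : Fin M, ((i : ℝ) + 1) = M * (M + 1) / 2 := by
  rw [Fin.sum_univ_eq_sum_range (fun i => (i : ℝ) + 1)]
  induction M with
  | zero => simp
  | succ n ih => rw [Finset.sum_range_succ, ih]; push_cast; ring

theorem sum_ceil_mul_le {c : ℝ} (hc : 0 ≤ c) (M : ℕ) :
    ((∑ i : Fin M, ⌈c * (i + 1)⌉₊ : ℕ) : ℝ) ≤ c * (M * (M + 1) / 2) + M := by
  calc ((∑ i : Fin M, ⌈c * (i + 1)⌉₊ : ℕ) : ℝ)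
      ≤ ∑ i : Fin M, (c * ((i : ℝ) + 1) + 1) := by
        push_cast
        gcongr with i
        exact (Nat.ceil_lt_add_one (by positivity)).le
    _ = c * (M * (M + 1) / 2) + M := by
        rw [Finset.sum_add_distrib, ← Finset.mul_sum, sum_fin_cast_add_one]
        simp

theorem sum_ceil_mul_le_of_le_one {c : ℝ} (hc : c ≤ 1) (M : ℕ) :
    ((∑ i : Fin M, ⌈c * (i + 1)⌉₊ : ℕ) : ℝ) ≤ M * (M + 1) / 2 := by
  rw [← sum_fin_cast_add_one]
  push_cast
  gcongr with i
  have hi : (0 : ℝ) ≤ i + 1 := by positivity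
  exact_mod_cast Nat.ceil_le.2 (by simpa using mul_le_of_le_one_left hi hc)

theorem bracketing_number_dim_two (δ : ℝ) (hδ0 : 0 < δ) (hδ1 : δ < 1) :
    (bracketingNumber 2 δ : ℝ) ≤
      2 * Real.log 2 * δ⁻¹ ^ 2 + 3 * (Real.log 2 + 1) * δ⁻¹
        - (13 / 9 * Real.log 2 - 1) := by
  set t := δ⁻¹
  set M := ⌈2 * t⌉₊
  have ht : 1 < t := (one_lt_inv₀ hδ0).2 hδ1
  have hδt : δ * t = 1 := mul_inv_cancel₀ hδ0.ne'
  have hM : (M : ℝ) < 2 * t + 1 := Nat.ceil_lt_add_one (by linarith)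
  have hδM : 2 ≤ δ * M := by nlinarith [Nat.le_ceil (2 * t)]
  set c := log (δ * M / (δ * M - 1))
  have hc0 : 0 ≤ c := log_nonneg (by rw [le_div_iff₀ (by linarith)]; linarith)
  have hc2 : c ≤ log 2 :=
    log_le_log (div_pos (by linarith) (by linarith)) (by rw [div_le_iff₀ (by linarith)]; linarith)
  have hN : (bracketingNumber 2 δ : ℝ) ≤ ((∑ i : Fin M, ⌈c * (i + 1)⌉₊ : ℕ) : ℝ) := by
    exact_mod_cast bracketingNumber_two_le_sum_ceil (by linarith)
  have hMM : (M : ℝ) * (M + 1) / 2 ≤ (2 * t + 1) * (2 * t + 2) / 2 := by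
    nlinarith [M.cast_nonneg (α := ℝ)]
  have hL := log_two_gt_d9
  have hL' := log_two_lt_d9
  -- The first estimate needs `t ≥ 22/9 · log 2`, the second one `t ≤ 2.8`.
  rcases le_or_gt 2 t with ht2 | ht2
  · have hsum := sum_ceil_mul_le hc0 M
    nlinarith [mul_le_mul hc2 hMM (by positivity) (log_nonneg one_le_two)]
  · have hsum := sum_ceil_mul_le_of_le_one (hc2.trans (by linarith)) M
    nlinarith [mul_nonneg (mul_nonneg (sub_nonneg.2 ht.le) (sub_nonneg.2 ht2.le))
      (sub_nonneg.2 (by linarith : log 2 ≤ 1))]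
end

section
/- For every d ∈ ℕ and every δ with 0 < δ < 1, the bracketing number satisfies N_{[ ]}(d, δ) ≤ max(1.1^{d-101}, 1) · (d^d / d!) · (δ^{-1} + 1)^d. -/
/-!
Put `M = d / δ`. A point `u` of the cube determines the decreasing chain of levels
`c 0 = M`, `c (j + 1) = ⌊u j * c j⌋`, and `u j ∈ [c (j + 1) / c j, (c (j + 1) + 1) / c j]`.
The lower corner of the resulting box has volume `c d / M` and, by telescoping, the `j`-th
coordinate adds at most `(c j / M) * (1 / c j) = 1 / M` to the volume gap, which is therefore at
most `d / M = δ`. The boxes are indexed by the weakly decreasing sequences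
`c 1 ≥ ⋯ ≥ c d` in `{0, …, ⌊M⌋}`, i.e. by multisets, of which there are
`C(⌊M⌋ + d, d) ≤ (M + d) ^ d / d!`.
-/

open Finset

theorem bracketingNumber_le_natCard {d : ℕ} {δ : ℝ} {ι : Type*} [Finite ι]
    (x y : ι → Fin d → ℝ)
    (hbox : ∀ i, x i ∈ Set.Icc (0 : Fin d → ℝ) 1 ∧ y i ∈ Set.Icc (x i) 1 ∧
      (∏ j, y i j) - (∏ j, x i j) ≤ δ)
    (hcover : Set.Icc (0 : Fin d → ℝ) 1 ⊆ ⋃ i, Set.Icc (x i) (y i)) :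
    bracketingNumber d δ ≤ Nat.card ι := by
  let e := (Finite.equivFin ι).symm
  refine Nat.sInf_le ⟨x ∘ e, y ∘ e, fun i => hbox (e i), ?_⟩
  rwa [Function.comp_def, Function.comp_def,
    e.surjective.iUnion_comp (fun i => Set.Icc (x i) (y i))]

theorem prod_range_sub_prod_range_le_sum (x y : ℕ → ℝ) (hx : ∀ i, 0 ≤ x i)
    (hxy : ∀ i, x i ≤ y i) (hy : ∀ i, y i ≤ 1) (n : ℕ) :
    (∏ i ∈ range n, y i) - ∏ i ∈ range n, x i ≤
      ∑ j ∈ range n, (∏ i ∈ range j, x i) * (y j - x j) := by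
  induction n with
  | zero => simp
  | succ n ih =>
    rw [prod_range_succ, prod_range_succ, sum_range_succ]
    have hX : 0 ≤ ∏ i ∈ range n, x i := prod_nonneg fun i _ => hx i
    have hXY : ∏ i ∈ range n, x i ≤ ∏ i ∈ range n, y i :=
      prod_le_prod (fun i _ => hx i) (fun i _ => hxy i)
    nlinarith [hy n, hx n, hxy n]

/-- The box `∏ j, [chainLower c j, chainUpper c j]` holds the points `u` with
`c (j + 1) = ⌊u j * c j⌋` for all `j`; once a level vanishes the remaining coordinates are
free (`chainLower` is `0` there because `x / 0 = 0`). -/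
noncomputable def chainLower (c : ℕ → ℝ) (j : ℕ) : ℝ := c (j + 1) / c j

noncomputable def chainUpper (c : ℕ → ℝ) (j : ℕ) : ℝ :=
  if c j = 0 then 1 else min ((c (j + 1) + 1) / c j) 1

section Chain

variable {c : ℕ → ℝ}

theorem chainLower_nonneg (hc : ∀ j, 0 ≤ c j) (j : ℕ) : 0 ≤ chainLower c j :=
  div_nonneg (hc _) (hc _)

theorem chainUpper_le_one (j : ℕ) : chainUpper c j ≤ 1 := by
  unfold chainUpper
  split_ifs
  exacts [le_rfl, min_le_right _ _]

theorem chainLower_le_chainUpper (hc : ∀ j, 0 ≤ c j) (hanti : Antitone c) (j : ℕ) :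
    chainLower c j ≤ chainUpper c j := by
  unfold chainLower chainUpper
  split_ifs with h
  · simp [h]
  · have hpos : 0 < c j := lt_of_le_of_ne (hc j) (Ne.symm h)
    exact le_min (div_le_div_of_nonneg_right (by linarith) hpos.le)
      (div_le_one_of_le₀ (hanti j.le_succ) hpos.le)

theorem prod_chainLower (hc : ∀ j, 0 ≤ c j) (hanti : Antitone c) (hc0 : c 0 ≠ 0) (n : ℕ) :
    ∏ i ∈ range n, chainLower c i = c n / c 0 := by
  induction n with
  | zero => simp [hc0]
  | succ n ih =>
    rw [prod_range_succ, ih, chainLower]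
    by_cases h : c n = 0
    · have : c (n + 1) = 0 := le_antisymm (h ▸ hanti n.le_succ) (hc _)
      simp [h, this]
    · field_simp

theorem div_mul_chainUpper_sub_chainLower_le (hc : ∀ j, 0 ≤ c j) (j : ℕ) :
    c j / c 0 * (chainUpper c j - chainLower c j) ≤ 1 / c 0 := by
  unfold chainUpper chainLower
  split_ifs with h
  · simpa [h] using one_div_nonneg.2 (hc 0)
  · calc c j / c 0 * (min ((c (j + 1) + 1) / c j) 1 - c (j + 1) / c j)
        ≤ c j / c 0 * ((c (j + 1) + 1) / c j - c (j + 1) / c j) := by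
          gcongr
          · exact div_nonneg (hc j) (hc 0)
          · exact min_le_left _ _
      _ = 1 / c 0 := by field_simp; ring

theorem prod_chainUpper_sub_prod_chainLower_le (hc : ∀ j, 0 ≤ c j) (hanti : Antitone c)
    (hc0 : c 0 ≠ 0) (n : ℕ) :
    ∏ i ∈ range n, chainUpper c i - ∏ i ∈ range n, chainLower c i ≤ n / c 0 := by
  calc _ ≤ ∑ j ∈ range n,
          (∏ i ∈ range j, chainLower c i) * (chainUpper c j - chainLower c j) :=
        prod_range_sub_prod_range_le_sum _ _ (chainLower_nonneg hc)
          (chainLower_le_chainUpper hc hanti) chainUpper_le_one n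
    _ ≤ ∑ _j ∈ range n, 1 / c 0 := by
        gcongr with j
        rw [prod_chainLower hc hanti hc0]
        exact div_mul_chainUpper_sub_chainLower_le hc j
    _ = n / c 0 := by simp [div_eq_mul_inv]

end Chain

noncomputable def floorChain (M : ℝ) (u : ℕ → ℝ) : ℕ → ℝ
  | 0 => M
  | j + 1 => ⌊u j * floorChain M u j⌋₊

section FloorChain

variable {M : ℝ} {u : ℕ → ℝ}

theorem floorChain_nonneg (hM : 0 ≤ M) (j : ℕ) : 0 ≤ floorChain M u j := by
  cases j
  exacts [hM, Nat.cast_nonneg _]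

theorem floorChain_antitone (hM : 0 ≤ M) (hu0 : ∀ j, 0 ≤ u j) (hu1 : ∀ j, u j ≤ 1) :
    Antitone (floorChain M u) := by
  refine antitone_nat_of_succ_le fun j => ?_
  have hc := floorChain_nonneg (u := u) hM j
  calc floorChain M u (j + 1) ≤ u j * floorChain M u j :=
        Nat.floor_le (mul_nonneg (hu0 j) hc)
    _ ≤ floorChain M u j := mul_le_of_le_one_left hc (hu1 j)

theorem mem_Icc_chainLower_chainUpper_floorChain (hM : 0 ≤ M) (hu0 : ∀ j, 0 ≤ u j)
    (hu1 : ∀ j, u j ≤ 1) (j : ℕ) :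
    u j ∈ Set.Icc (chainLower (floorChain M u) j) (chainUpper (floorChain M u) j) := by
  have hc := floorChain_nonneg (u := u) hM j
  unfold chainLower chainUpper
  simp only [floorChain]
  split_ifs with h
  · simp [h, hu0 j, hu1 j]
  · have hpos : 0 < floorChain M u j := lt_of_le_of_ne hc (Ne.symm h)
    refine ⟨(div_le_iff₀ hpos).2 (Nat.floor_le (mul_nonneg (hu0 j) hc)),
      le_min ((le_div_iff₀ hpos).2 (Nat.lt_floor_add_one _).le) (hu1 j)⟩

end FloorChain

theorem natCard_antitone_le_natCard_sym (α : Type*) [PartialOrder α] [Finite α] (d : ℕ) :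
    Nat.card {k : Fin d → α // Antitone k} ≤ Nat.card (Sym α d) := by
  refine Nat.card_le_card_of_injective (fun k => ⟨(List.ofFn k.1 : Multiset α), by simp⟩) ?_
  intro k k' h
  have hperm : (List.ofFn k.1).Perm (List.ofFn k'.1) :=
    Multiset.coe_eq_coe.1 (congrArg Subtype.val h)
  exact Subtype.ext (List.ofFn_injective (hperm.eq_of_pairwise'
    k.2.sortedGE_ofFn.pairwise k'.2.sortedGE_ofFn.pairwise))

noncomputable def indexChain (M : ℝ) {d : ℕ} (k : Fin d → ℕ) : ℕ → ℝ
  | 0 => M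
  | j + 1 => if h : j < d then (k ⟨j, h⟩ : ℝ) else 0

section IndexChain

variable {M : ℝ} {d : ℕ} {k : Fin d → ℕ}

theorem indexChain_nonneg (hM : 0 ≤ M) (j : ℕ) : 0 ≤ indexChain M k j := by
  unfold indexChain
  split
  · exact hM
  · split_ifs <;> positivity

theorem indexChain_antitone (hM : 0 ≤ M) (hk : Antitone k) (hkM : ∀ j, (k j : ℝ) ≤ M) :
    Antitone (indexChain M k) := by
  refine antitone_nat_of_succ_le fun j => ?_
  cases j with
  | zero =>
    simp only [indexChain]
    split_ifs
    exacts [hkM _, hM]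
  | succ j =>
    by_cases h : j + 1 < d
    · simp only [indexChain, h, dif_pos, show j < d by omega]
      exact_mod_cast hk (Fin.mk_le_mk.2 j.le_succ)
    · simp only [indexChain, h, dif_neg, not_false_eq_true]
      exact indexChain_nonneg hM (j + 1)

theorem indexChain_eq_of_forall {c : ℕ → ℝ} (h0 : c 0 = M)
    (hk : ∀ j : Fin d, (k j : ℝ) = c (j + 1)) {i : ℕ} (hi : i ≤ d) :
    indexChain M k i = c i := by
  cases i with
  | zero => exact h0.symm
  | succ i => simpa [indexChain, show i < d by omega] using hk ⟨i, by omega⟩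

end IndexChain

theorem exists_antitone_indexChain_eq_floorChain {M : ℝ} (hM : 0 ≤ M) {u : ℕ → ℝ}
    (hu0 : ∀ j, 0 ≤ u j) (hu1 : ∀ j, u j ≤ 1) (d : ℕ) :
    ∃ k : Fin d → Fin (⌊M⌋₊ + 1), Antitone k ∧
      ∀ i ≤ d, indexChain M (fun j => (k j : ℕ)) i = floorChain M u i := by
  have hf := floorChain_antitone hM hu0 hu1
  have hle : ∀ j, ⌊u j * floorChain M u j⌋₊ ≤ ⌊M⌋₊ := fun j =>
    Nat.le_floor (hf (Nat.zero_le (j + 1)))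
  refine ⟨fun j => ⟨⌊u j * floorChain M u j⌋₊, Nat.lt_succ_of_le (hle j)⟩,
    fun i j hij => Fin.mk_le_mk.2 (Nat.cast_le.1 (hf (Nat.succ_le_succ hij))),
    fun i hi => indexChain_eq_of_forall (c := floorChain M u) rfl (fun j => rfl) hi⟩

theorem bracketingNumber_le_choose {d : ℕ} (hd : 0 < d) {δ : ℝ} (hδ : 0 < δ) :
    bracketingNumber d δ ≤ (⌊d / δ⌋₊ + d).choose d := by
  set M : ℝ := d / δ with hMdef
  have hM : 0 < M := by positivity
  set ι := {k : Fin d → Fin (⌊M⌋₊ + 1) // Antitone k}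
  let c : ι → ℕ → ℝ := fun k => indexChain M (fun j => (k.1 j : ℕ))
  have hc : ∀ k j, 0 ≤ c k j := fun k => indexChain_nonneg hM.le
  have hanti : ∀ k, Antitone (c k) := fun k =>
    indexChain_antitone hM.le (fun _ _ hij => k.2 hij) fun j =>
      (Nat.cast_le.2 (Nat.lt_succ_iff.1 (k.1 j).2)).trans (Nat.floor_le hM.le)
  calc bracketingNumber d δ
      ≤ Nat.card ι := bracketingNumber_le_natCard
        (fun k j => chainLower (c k) j) (fun k j => chainUpper (c k) j) ?box ?cover
    _ ≤ Nat.card (Sym (Fin (⌊M⌋₊ + 1)) d) := natCard_antitone_le_natCard_sym _ d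
    _ = (⌊M⌋₊ + d).choose d := by
        rw [Sym.natCard_sym_eq_choose, Nat.card_eq_fintype_card, Fintype.card_fin]
        congr 1
        omega
  case box =>
    intro k
    refine ⟨⟨fun j => chainLower_nonneg (hc k) j, fun j => ?_⟩,
      ⟨fun j => chainLower_le_chainUpper (hc k) (hanti k) j, fun j => chainUpper_le_one j⟩,
      ?_⟩
    · exact (chainLower_le_chainUpper (hc k) (hanti k) j).trans (chainUpper_le_one j)
    · rw [Fin.prod_univ_eq_prod_range (fun j => chainUpper (c k) j),
        Fin.prod_univ_eq_prod_range (fun j => chainLower (c k) j)]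
      calc _ ≤ d / c k 0 := prod_chainUpper_sub_prod_chainLower_le (hc k) (hanti k) hM.ne' d
        _ = δ := by simp only [c, indexChain, hMdef]; field_simp
  case cover =>
    intro v hv
    let u : ℕ → ℝ := fun j => if h : j < d then v ⟨j, h⟩ else 0
    have hu0 : ∀ j, 0 ≤ u j := fun j => by
      simp only [u]; split_ifs; exacts [hv.1 _, le_rfl]
    have hu1 : ∀ j, u j ≤ 1 := fun j => by
      simp only [u]; split_ifs; exacts [hv.2 _, zero_le_one]
    obtain ⟨k, hk, hck⟩ := exists_antitone_indexChain_eq_floorChain hM.le hu0 hu1 d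
    refine Set.mem_iUnion.2 ⟨⟨k, hk⟩, forall_and.1 fun j => ?_⟩
    have hmem := mem_Icc_chainLower_chainUpper_floorChain hM.le hu0 hu1 j
    simp only [chainLower, chainUpper, c, hck j j.is_lt.le, hck (j + 1) j.is_lt] at hmem ⊢
    simpa [u] using hmem

theorem bracketing_number_general_general (d : ℕ) (hd : 1 ≤ d)
    (δ : ℝ) (hδ0 : 0 < δ) :
    (bracketingNumber d δ : ℝ) ≤
      max ((1.1 : ℝ) ^ ((d : ℤ) - 101)) 1 *
        ((d : ℝ) ^ d / (Nat.factorial d : ℝ)) * (δ⁻¹ + 1) ^ d := by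
  have hlevels : ((⌊d / δ⌋₊ + d : ℕ) : ℝ) ≤ d * (δ⁻¹ + 1) := by
    push_cast
    linarith [Nat.floor_le (div_nonneg d.cast_nonneg hδ0.le), div_eq_mul_inv (d : ℝ) δ]
  calc (bracketingNumber d δ : ℝ)
      ≤ ((⌊d / δ⌋₊ + d).choose d : ℝ) := mod_cast bracketingNumber_le_choose hd hδ0
    _ ≤ ((⌊d / δ⌋₊ + d : ℕ) : ℝ) ^ d / d.factorial := Nat.choose_le_pow_div d _
    _ ≤ (d * (δ⁻¹ + 1)) ^ d / d.factorial := by gcongr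
    _ = (d ^ d / d.factorial) * (δ⁻¹ + 1) ^ d := by rw [mul_pow]; ring
    _ ≤ _ := by
      rw [mul_assoc]
      exact le_mul_of_one_le_left (by positivity) (le_max_right _ _)

theorem bracketing_number_general (d : ℕ) (hd : 1 ≤ d)
    (δ : ℝ) (hδ0 : 0 < δ) (hδ1 : δ < 1) :
    (bracketingNumber d δ : ℝ) ≤
      max ((1.1 : ℝ) ^ ((d : ℤ) - 101)) 1 *
        ((d : ℝ) ^ d / (Nat.factorial d : ℝ)) * (δ⁻¹ + 1) ^ d :=
  bracketing_number_general_general d hd δ hδ0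
end

section
/- For fixed d ∈ ℕ, the function f(k) = d!/(d^{k-1}·(d-k+1)!) · (k/12 + 1/2), defined for natural numbers 1 ≤ k ≤ d, attains its maximum at k = −3 + ⌈√(16+d)⌉. -/
/-!
Since `f (k + 1) / f k = (d - k + 1) (k + 7) / (d (k + 6))`, the sequence grows exactly while
`(d - k + 1) (k + 7) > d (k + 6)`, i.e. while `(k + 3)² < d + 16`, i.e. while `k < ⌈√(16 + d)⌉ - 3`.
So `f` increases on `[1, peak d]` and decreases on `[peak d, d]`.
-/

namespace CeilSqrtMax

open Nat

noncomputable def f (d k : ℕ) : ℝ :=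
  (d ! : ℝ) / ((d : ℝ) ^ (k - 1) * ((d - k + 1)! : ℝ)) * ((k : ℝ) / 12 + 1 / 2)

noncomputable def peak (d : ℕ) : ℕ := ⌈Real.sqrt (16 + d)⌉₊ - 3

variable {d k : ℕ}

theorem f_pos (hd : 0 < d) : 0 < f d k := by
  unfold f; positivity

-- At `k = d` this holds only through truncated subtraction and `1! = 0!`.
theorem factorial_sub_succ_add_one (hkd : k ≤ d) : (d - (k + 1) + 1)! = (d - k)! := by
  obtain ⟨n, rfl⟩ := Nat.exists_eq_add_of_le hkd
  rcases n with _ | n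
  · simp
  · congr 1; omega

theorem f_succ_mul (hk : 1 ≤ k) (hkd : k ≤ d) :
    f d (k + 1) * (d * (k + 6)) = f d k * ((d - k + 1) * (k + 7)) := by
  have hd : (0 : ℝ) < d := by exact_mod_cast hk.trans hkd
  have hpow : (d : ℝ) ^ (k + 1 - 1) = d ^ (k - 1) * d := by
    rw [← pow_succ, Nat.sub_add_cancel hk, Nat.add_sub_cancel]
  have hfact : ((d - k + 1)! : ℝ) = (d - k + 1 : ℝ) * (d - k)! := by
    rw [Nat.factorial_succ]; push_cast [hkd]; ring
  unfold f
  rw [hpow, hfact, factorial_sub_succ_add_one hkd]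
  have : ((d - k)! : ℝ) ≠ 0 := by positivity
  have : (d - k + 1 : ℝ) ≠ 0 := by
    have : (k : ℝ) ≤ d := by exact_mod_cast hkd
    linarith
  field_simp
  push_cast
  ring

theorem f_succ_le_iff (hk : 1 ≤ k) (hkd : k ≤ d) :
    f d (k + 1) ≤ f d k ↔ d + 7 ≤ k ^ 2 + 6 * k := by
  have hd : (0 : ℝ) < d := by exact_mod_cast hk.trans hkd
  have hscale : (0 : ℝ) < d * (k + 6) := by positivity
  rw [← mul_le_mul_iff_of_pos_right hscale, f_succ_mul hk hkd,
    mul_le_mul_iff_of_pos_left (f_pos (by exact_mod_cast hd)), ← Nat.cast_le (α := ℝ)]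
  push_cast
  constructor <;> intro h <;> nlinarith

theorem lt_peak_iff (j : ℕ) : j < peak d ↔ j ^ 2 + 6 * j < d + 7 := by
  have h : j < peak d ↔ ((j + 3 : ℕ) : ℝ) < Real.sqrt (16 + d) := by
    rw [← Nat.lt_ceil, peak]; omega
  rw [h, Real.lt_sqrt (by positivity), ← Nat.cast_lt (α := ℝ)]
  push_cast
  constructor <;> intro h <;> nlinarith

theorem f_monotoneOn : MonotoneOn (f d) (Set.Icc 1 (peak d)) := by
  refine monotoneOn_of_le_add_one Set.ordConnected_Icc fun a _ ha ha1 => ?_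
  have hsmall := (lt_peak_iff a).1 ha1.2
  have had : a ≤ d := by nlinarith
  exact le_of_not_ge fun h => by have := (f_succ_le_iff ha.1 had).1 h; omega

theorem f_antitoneOn : AntitoneOn (f d) (Set.Icc (peak d) d) := by
  refine antitoneOn_of_add_one_le Set.ordConnected_Icc fun a _ ha ha1 => ?_
  have hpeak : 1 ≤ peak d := (lt_peak_iff 0).2 (by omega)
  have hlarge := not_lt.1 ((lt_peak_iff a).not.1 (not_lt.2 ha.1))
  exact (f_succ_le_iff (hpeak.trans ha.1) (Nat.le_of_succ_le ha1.2)).2 hlarge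

end CeilSqrtMax

theorem f_max_at_ceil_sqrt_general (d : ℕ) (k : ℕ) (hk1 : 1 ≤ k)
    (hkd : k ≤ d) :
    (Nat.factorial d : ℝ) / ((d : ℝ) ^ (k - 1) * (Nat.factorial (d - k + 1) : ℝ))
        * ((k : ℝ) / 12 + 1 / 2) ≤
      (Nat.factorial d : ℝ) /
          ((d : ℝ) ^ ((⌈Real.sqrt (16 + d)⌉₊ - 3) - 1) *
            (Nat.factorial (d - (⌈Real.sqrt (16 + d)⌉₊ - 3) + 1) : ℝ))
        * (((⌈Real.sqrt (16 + d)⌉₊ - 3 : ℕ) : ℝ) / 12 + 1 / 2) := by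
  show CeilSqrtMax.f d k ≤ CeilSqrtMax.f d (CeilSqrtMax.peak d)
  rcases le_total k (CeilSqrtMax.peak d) with hk | hk
  · exact CeilSqrtMax.f_monotoneOn ⟨hk1, hk⟩ ⟨hk1.trans hk, le_rfl⟩ hk
  · exact CeilSqrtMax.f_antitoneOn ⟨le_rfl, hk.trans hkd⟩ ⟨hk, hkd⟩ hk

/-- The function `f(k) = d!/(d^{k-1}(d-k+1)!) (k/12 + 1/2)` attains its
maximum over `1 ≤ k ≤ d` at `k = -3 + ⌈√(16+d)⌉`. -/
theorem f_max_at_ceil_sqrt (d : ℕ) (hd : 1 ≤ d) (k : ℕ) (hk1 : 1 ≤ k)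
    (hkd : k ≤ d) :
    (Nat.factorial d : ℝ) / ((d : ℝ) ^ (k - 1) * (Nat.factorial (d - k + 1) : ℝ))
        * ((k : ℝ) / 12 + 1 / 2) ≤
      (Nat.factorial d : ℝ) /
          ((d : ℝ) ^ ((⌈Real.sqrt (16 + d)⌉₊ - 3) - 1) *
            (Nat.factorial (d - (⌈Real.sqrt (16 + d)⌉₊ - 3) + 1) : ℝ))
        * (((⌈Real.sqrt (16 + d)⌉₊ - 3 : ℕ) : ℝ) / 12 + 1 / 2) :=
  f_max_at_ceil_sqrt_general d k hk1 hkd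
end

section
/- For fixed d ∈ ℕ, if g_d(k) = d!/(d^{k-1}·(d-k+1)!) · (k/12 + 1/2 + 1/(k+1)) for natural numbers 1 ≤ k ≤ d, then any maximizer k_max of g_d satisfies k_max ≤ min(−3 + ⌈√(16+d)⌉, 1 + ⌈0.0544·d⌉). -/
/-!
Writing the last factor of `g_d(k)` as `h(k) = (k² + 7k + 18) / (12 (k + 1))`, the ratio of consecutive
values is `g_d(k+1) / g_d(k) = (d - k + 1) / d · h(k+1) / h(k)`, so `g_d(k+1) < g_d(k)` exactly
when `d (k + 5)(k - 2) < (k - 1)(k + 1)(k² + 9k + 26)`. Each of the two bounds on `d` puts every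
`k` at or beyond the claimed bound into this region; a maximizer beyond it would then be beaten
by its predecessor.
-/

noncomputable def g (d k : ℕ) : ℝ :=
  (Nat.factorial d : ℝ) / ((d : ℝ) ^ (k - 1) * (Nat.factorial (d - k + 1) : ℝ))
    * ((k : ℝ) / 12 + 1 / 2 + 1 / ((k : ℝ) + 1))

lemma div_twelve_add_half_add_one_div_succ_eq (k : ℕ) :
    (k : ℝ) / 12 + 1 / 2 + 1 / ((k : ℝ) + 1) = ((k : ℝ) ^ 2 + 7 * k + 18) / (12 * (k + 1)) := by
  field_simp
  ring

lemma g_succ_lt_g_iff {d k : ℕ} (hk : 1 ≤ k) (hkd : k < d) :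
    g d (k + 1) < g d k ↔
      (d : ℝ) * (k + 5) * (k - 2) < (k - 1) * (k + 1) * ((k : ℝ) ^ 2 + 9 * k + 26) := by
  obtain ⟨j, rfl⟩ : ∃ j, k = j + 1 := ⟨k - 1, by omega⟩
  obtain ⟨e, rfl⟩ : ∃ e, d = j + e + 2 := ⟨d - j - 2, by omega⟩
  unfold g
  rw [show j + e + 2 - (j + 1 + 1) + 1 = e + 1 by omega, show j + e + 2 - (j + 1) + 1 = e + 2 by omega,
    Nat.factorial_succ (e + 1), show j + 1 + 1 - 1 = j + 1 by omega, show j + 1 - 1 = j by omega,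
    pow_succ, div_twelve_add_half_add_one_div_succ_eq, div_twelve_add_half_add_one_div_succ_eq]
  push_cast
  set D : ℝ := (j : ℝ) + e + 2
  set c : ℝ := (Nat.factorial (j + e + 2) : ℝ) / (D ^ j * Nat.factorial (e + 1))
  have hc : 0 < c := by positivity
  have hl : (Nat.factorial (j + e + 2) : ℝ) / (D ^ j * D * Nat.factorial (e + 1)) *
      (((j + 1 + 1 : ℝ) ^ 2 + 7 * (j + 1 + 1) + 18) / (12 * (j + 1 + 1 + 1))) =
      c * (((j + 2 : ℝ) ^ 2 + 7 * (j + 2) + 18) / (D * (12 * (j + 3)))) := by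
    simp only [c]; field_simp; ring
  have hr : (Nat.factorial (j + e + 2) : ℝ) / (D ^ j * ((e + 1 + 1) * Nat.factorial (e + 1))) *
      (((j + 1 : ℝ) ^ 2 + 7 * (j + 1) + 18) / (12 * (j + 1 + 1))) =
      c * (((j + 1 : ℝ) ^ 2 + 7 * (j + 1) + 18) / ((e + 2) * (12 * (j + 2)))) := by
    simp only [c]; field_simp; ring
  rw [hl, hr, mul_lt_mul_iff_right₀ hc, div_lt_div_iff₀ (by positivity) (by positivity)]
  constructor <;> intro h <;> linarith

lemma le_of_forall_succ_lt {α : Type*} [Preorder α] {f : ℕ → α} {d kmax b : ℕ} (hb : 1 ≤ b)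
    (hkd : kmax ≤ d) (hmax : ∀ k, 1 ≤ k → k ≤ d → f k ≤ f kmax)
    (hdec : ∀ k, b ≤ k → k < d → f (k + 1) < f k) : kmax ≤ b := by
  by_contra! hbk
  obtain ⟨k, rfl⟩ : ∃ k, kmax = k + 1 := ⟨kmax - 1, by omega⟩
  exact (hmax k (by omega) (by omega)).not_gt (hdec k (by omega) hkd)

lemma g_succ_lt_g_of_sq_le {d k : ℕ} (hk : 1 ≤ k) (hkd : k < d) (h : 16 + (d : ℝ) ≤ (k + 3) ^ 2) :
    g d (k + 1) < g d k := by
  rw [g_succ_lt_g_iff hk hkd]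
  have hd : (k : ℝ) + 1 ≤ d := by exact_mod_cast hkd
  rcases hk.eq_or_lt with rfl | hk2
  · norm_num; linarith
  have hk2 : (2 : ℝ) ≤ k := by exact_mod_cast hk2
  nlinarith [mul_le_mul_of_nonneg_right (show (d : ℝ) ≤ (k + 7) * (k - 1) by linarith)
    (show (0 : ℝ) ≤ (k + 5) * (k - 2) by nlinarith)]

lemma g_succ_lt_g_of_linear_le {d k : ℕ} (hk : 1 ≤ k) (hkd : k < d)
    (h : (0.0544 : ℝ) * d + 1 ≤ k) : g d (k + 1) < g d k := by
  rw [g_succ_lt_g_iff hk hkd]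
  have hd : (k : ℝ) + 1 ≤ d := by exact_mod_cast hkd
  rcases hk.eq_or_lt with rfl | hk2
  · norm_num; linarith
  -- Tight at `k = 7` (margin 36): there the step needs a constant above `60 / 1104 ≈ 0.05435`.
  have hcubic : 285 * k ^ 2 + 685 * k < 34 * k ^ 3 + 7134 := by
    rcases le_or_gt k 12 with hk12 | hk12
    · interval_cases k <;> norm_num
    · nlinarith
  have hcubic : (285 : ℝ) * k ^ 2 + 685 * k < 34 * k ^ 3 + 7134 := by exact_mod_cast hcubic
  have hk2 : (2 : ℝ) ≤ k := by exact_mod_cast hk2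
  nlinarith [mul_le_mul_of_nonneg_right (show (544 : ℝ) * d ≤ 10000 * (k - 1) by linarith)
    (show (0 : ℝ) ≤ (k + 5) * (k - 2) by nlinarith)]

theorem g_maximizer_bound_general (d : ℕ) (kmax : ℕ)
    (hkd : kmax ≤ d)
    (hmax : ∀ k : ℕ, 1 ≤ k → k ≤ d →
      (Nat.factorial d : ℝ) /
          ((d : ℝ) ^ (k - 1) * (Nat.factorial (d - k + 1) : ℝ))
        * ((k : ℝ) / 12 + 1 / 2 + 1 / ((k : ℝ) + 1)) ≤
      (Nat.factorial d : ℝ) /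
          ((d : ℝ) ^ (kmax - 1) * (Nat.factorial (d - kmax + 1) : ℝ))
        * ((kmax : ℝ) / 12 + 1 / 2 + 1 / ((kmax : ℝ) + 1))) :
    kmax ≤ min (⌈Real.sqrt (16 + d)⌉₊ - 3) (1 + ⌈(0.0544 : ℝ) * d⌉₊) := by
  have hg : ∀ k, 1 ≤ k → k ≤ d → g d k ≤ g d kmax := hmax
  have hsqrt : 3 < ⌈Real.sqrt (16 + (d : ℝ))⌉₊ :=
    Nat.lt_ceil.2 <| (Real.lt_sqrt (by norm_num)).2 (by push_cast; linarith [d.cast_nonneg (α := ℝ)])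
  refine le_min (le_of_forall_succ_lt (by omega) hkd hg fun k hk hkd => ?_)
    (le_of_forall_succ_lt (by omega) hkd hg fun k hk hkd => ?_)
  · refine g_succ_lt_g_of_sq_le (by omega) hkd ?_
    have hceil : ⌈Real.sqrt (16 + (d : ℝ))⌉₊ ≤ k + 3 := by omega
    exact (Real.sqrt_le_left (by positivity)).1 (by exact_mod_cast Nat.ceil_le.1 hceil)
  · refine g_succ_lt_g_of_linear_le (by omega) hkd ?_
    have hk : 1 + ((⌈(0.0544 : ℝ) * d⌉₊ : ℕ) : ℝ) ≤ k := by exact_mod_cast hk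
    linarith [Nat.le_ceil ((0.0544 : ℝ) * d)]

/-- Any maximizer of `g_d(k) = d!/(d^{k-1}(d-k+1)!)(k/12 + 1/2 + 1/(k+1))`
over `1 ≤ k ≤ d` satisfies
`k_max ≤ min(-3 + ⌈√(16+d)⌉, 1 + ⌈0.0544 d⌉)`. -/
theorem g_maximizer_bound (d : ℕ) (hd : 1 ≤ d) (kmax : ℕ)
    (hk1 : 1 ≤ kmax) (hkd : kmax ≤ d)
    (hmax : ∀ k : ℕ, 1 ≤ k → k ≤ d →
      (Nat.factorial d : ℝ) /
          ((d : ℝ) ^ (k - 1) * (Nat.factorial (d - k + 1) : ℝ))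
        * ((k : ℝ) / 12 + 1 / 2 + 1 / ((k : ℝ) + 1)) ≤
      (Nat.factorial d : ℝ) /
          ((d : ℝ) ^ (kmax - 1) * (Nat.factorial (d - kmax + 1) : ℝ))
        * ((kmax : ℝ) / 12 + 1 / 2 + 1 / ((kmax : ℝ) + 1))) :
    kmax ≤ min (⌈Real.sqrt (16 + d)⌉₊ - 3) (1 + ⌈(0.0544 : ℝ) * d⌉₊) :=
  g_maximizer_bound_general d kmax hkd hmax
end

section
/- Let X be a random variable with 0 ≤ X ≤ 1 almost surely, and suppose there are constants α, β > 0 and d, N ∈ ℕ with β·d ≤ α·N such that for all c > 0, P(X ≤ c·√(d/N)) ≥ 1 − exp(−(α·c² − β)·d). Then E[X] ≤ √(β/α)·(1 + 1/(2βd))·√(d/N). -/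
open MeasureTheory Set Real Filter Topology

/-!
By the layer-cake formula, `E[X] = ∫₀^∞ P(X > t) dt`. Below `A = √(β/α) · √(d/N)` bound the
integrand by `1`; above `A` the hypothesis, read at `c = t / √(d/N)`, gives
`P(X > t) ≤ exp(β d) · exp(-α N t²)`, and the Gaussian tail estimate
`∫_A^∞ exp(-b t²) dt ≤ exp(-b A²) / (2 b A)` with `b = α N`, `b A² = β d`
bounds that part by `1 / (2 α N A) = A / (2 β d)`.
-/

theorem integral_Ioi_mul_exp_neg_mul_sq {b : ℝ} (hb : 0 < b) (A : ℝ) :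
    ∫ t in Ioi A, t * exp (-b * t ^ 2) = exp (-b * A ^ 2) / (2 * b) := by
  have hderiv : ∀ t ∈ Ici A,
      HasDerivAt (fun t ↦ -exp (-b * t ^ 2) / (2 * b)) (t * exp (-b * t ^ 2)) t := by
    intro t _
    have hsq : HasDerivAt (fun t : ℝ ↦ -b * t ^ 2) (-b * (2 * t)) t := by
      simpa using (hasDerivAt_pow 2 t).const_mul (-b)
    refine hsq.exp.neg.div_const (2 * b) |>.congr_deriv ?_
    field_simp
  have hlim : Tendsto (fun t : ℝ ↦ -exp (-b * t ^ 2) / (2 * b)) atTop (𝓝 0) := by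
    have hexp : Tendsto (fun t : ℝ ↦ exp (-b * t ^ 2)) atTop (𝓝 0) :=
      tendsto_exp_atBot.comp <|
        (tendsto_pow_atTop two_ne_zero).const_mul_atTop_of_neg (neg_neg_of_pos hb)
    simpa using hexp.neg.div_const (2 * b)
  rw [integral_Ioi_of_hasDerivAt_of_tendsto' hderiv
    (integrable_mul_exp_neg_mul_sq hb).integrableOn hlim]
  ring

theorem integral_Ioi_exp_neg_mul_sq_le {b A : ℝ} (hb : 0 < b) (hA : 0 < A) :
    ∫ t in Ioi A, exp (-b * t ^ 2) ≤ exp (-b * A ^ 2) / (2 * b * A) :=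
  calc ∫ t in Ioi A, exp (-b * t ^ 2)
      ≤ ∫ t in Ioi A, t * exp (-b * t ^ 2) / A := by
        refine setIntegral_mono_on (integrable_exp_neg_mul_sq hb).integrableOn
          ((integrable_mul_exp_neg_mul_sq hb).div_const A).integrableOn measurableSet_Ioi ?_
        intro t (ht : A < t)
        rw [le_div_iff₀ hA, mul_comm]
        gcongr
    _ = exp (-b * A ^ 2) / (2 * b * A) := by
        rw [integral_div, integral_Ioi_mul_exp_neg_mul_sq hb, div_div]

theorem integral_le_mul_add_integral_of_measureReal_lt_le {Ω : Type*} [MeasurableSpace Ω]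
    {μ : Measure Ω} [IsFiniteMeasure μ] {X : Ω → ℝ} (hX : Integrable X μ) (hX0 : 0 ≤ᵐ[μ] X)
    {A : ℝ} (hA : 0 ≤ A) {f : ℝ → ℝ} (hf : IntegrableOn f (Ioi A))
    (htail : ∀ t ∈ Ioi A, μ.real {ω | t < X ω} ≤ f t) :
    ∫ ω, X ω ∂μ ≤ A * μ.real univ + ∫ t in Ioi A, f t := by
  set g : ℝ → ℝ := fun t ↦ μ.real {ω | t < X ω}
  have hg_meas : Measurable g :=
    Antitone.measurable fun s t hst ↦ measureReal_mono fun ω (h : t < X ω) ↦ hst.trans_lt h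
  have hg_le : ∀ t, g t ≤ μ.real univ := fun t ↦ measureReal_mono (subset_univ _)
  have hg_Ioc : IntegrableOn g (Ioc 0 A) :=
    IntegrableOn.of_bound measure_Ioc_lt_top hg_meas.aestronglyMeasurable (μ.real univ)
      (ae_of_all _ fun t ↦ by rw [norm_of_nonneg measureReal_nonneg]; exact hg_le t)
  have hg_Ioi : IntegrableOn g (Ioi A) :=
    hf.mono' hg_meas.aestronglyMeasurable <| (ae_restrict_mem measurableSet_Ioi).mono
      fun t ht ↦ by rw [norm_of_nonneg measureReal_nonneg]; exact htail t ht
  calc ∫ ω, X ω ∂μ = ∫ t in Ioi 0, g t := hX.integral_eq_integral_meas_lt hX0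
    _ = (∫ t in Ioc 0 A, g t) + ∫ t in Ioi A, g t := by
        rw [← Ioc_union_Ioi_eq_Ioi hA]
        exact setIntegral_union (Ioc_disjoint_Ioi le_rfl) measurableSet_Ioi hg_Ioc hg_Ioi
    _ ≤ (∫ _ in Ioc 0 A, μ.real univ) + ∫ t in Ioi A, f t :=
        add_le_add
          (setIntegral_mono_on hg_Ioc (integrableOn_const measure_Ioc_lt_top.ne)
            measurableSet_Ioc fun t _ ↦ hg_le t)
          (setIntegral_mono_on hg_Ioi hf measurableSet_Ioi htail)
    _ = A * μ.real univ + ∫ t in Ioi A, f t := by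
        simp [Real.volume_real_Ioc_of_le hA]

theorem expectation_bound_from_tail_general {Ω : Type*} [MeasurableSpace Ω]
    (μ : Measure Ω) [IsProbabilityMeasure μ]
    (X : Ω → ℝ) (hX : Measurable X) (hX01 : ∀ ω, X ω ∈ Set.Icc (0 : ℝ) 1)
    (α β : ℝ) (hα : 0 < α) (hβ : 0 < β)
    (d N : ℕ) (hd : 0 < d) (hN : 0 < N)
    (htail : ∀ c : ℝ, 0 < c →
      (μ {ω | X ω ≤ c * Real.sqrt ((d : ℝ) / N)}).toReal ≥
        1 - Real.exp (-(α * c ^ 2 - β) * d)) :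
    ∫ ω, X ω ∂μ ≤
      Real.sqrt (β / α) * (1 + 1 / (2 * β * d)) * Real.sqrt ((d : ℝ) / N) := by
  set s := √((d : ℝ) / N)
  set A := √(β / α) * s
  have hs : 0 < s := sqrt_pos.2 (by positivity)
  have hA : 0 < A := mul_pos (sqrt_pos.2 (by positivity)) hs
  have hbA : α * N * A ^ 2 = β * d := by
    rw [mul_pow, sq_sqrt (by positivity), sq_sqrt (by positivity)]
    field_simp
  have hX_int : Integrable X μ :=
    Integrable.of_bound hX.aestronglyMeasurable 1 <| ae_of_all _ fun ω ↦ by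
      rw [norm_of_nonneg (hX01 ω).1]; exact (hX01 ω).2
  have hX_tail : ∀ t ∈ Ioi A, μ.real {ω | t < X ω} ≤ exp (β * d) * exp (-(α * N) * t ^ 2) := by
    intro t (ht : A < t)
    have h := htail (t / s) (div_pos (hA.trans ht) hs)
    rw [div_mul_cancel₀ t hs.ne', div_pow, sq_sqrt (by positivity)] at h
    calc μ.real {ω | t < X ω} = 1 - μ.real {ω | X ω ≤ t} := by
          rw [← probReal_compl_eq_one_sub (measurableSet_le hX measurable_const)]
          congr
          ext
          simp
      _ ≤ exp (-(α * (t ^ 2 / (d / N)) - β) * d) := by rw [measureReal_def]; linarith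
      _ = exp (β * d) * exp (-(α * N) * t ^ 2) := by
          rw [← exp_add]
          congr 1
          field_simp
          ring
  calc ∫ ω, X ω ∂μ ≤ A * μ.real univ + ∫ t in Ioi A, exp (β * d) * exp (-(α * N) * t ^ 2) :=
        integral_le_mul_add_integral_of_measureReal_lt_le hX_int (ae_of_all _ fun ω ↦ (hX01 ω).1)
          hA.le ((integrable_exp_neg_mul_sq (by positivity)).const_mul _).integrableOn hX_tail
    _ ≤ A + exp (β * d) * (exp (-(α * N) * A ^ 2) / (2 * (α * N) * A)) := by
        rw [probReal_univ, mul_one, integral_const_mul]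
        gcongr
        exact integral_Ioi_exp_neg_mul_sq_le (by positivity) hA
    _ = A * (1 + 1 / (2 * β * d)) := by
        rw [neg_mul, hbA, exp_neg]
        field_simp
        linear_combination -hbA
    _ = √(β / α) * (1 + 1 / (2 * β * d)) * s := mul_right_comm _ _ _

/-- Bound on the expectation of a `[0,1]`-valued random variable given a
sub-Gaussian type probabilistic bound. -/
theorem expectation_bound_from_tail {Ω : Type*} [MeasurableSpace Ω]
    (μ : Measure Ω) [IsProbabilityMeasure μ]
    (X : Ω → ℝ) (hX : Measurable X) (hX01 : ∀ ω, X ω ∈ Set.Icc (0 : ℝ) 1)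
    (α β : ℝ) (hα : 0 < α) (hβ : 0 < β)
    (d N : ℕ) (hd : 0 < d) (hN : 0 < N) (hβd : β * d ≤ α * N)
    (htail : ∀ c : ℝ, 0 < c →
      (μ {ω | X ω ≤ c * Real.sqrt ((d : ℝ) / N)}).toReal ≥
        1 - Real.exp (-(α * c ^ 2 - β) * d)) :
    ∫ ω, X ω ∂μ ≤
      Real.sqrt (β / α) * (1 + 1 / (2 * β * d)) * Real.sqrt ((d : ℝ) / N) :=
  expectation_bound_from_tail_general μ X hX hX01 α β hα hβ d N hd hN htail
end

section
/- Let 0 < δ < 1, b_1 = √(1−δ), and define the sequence b_0 = 1, b_{i+1} = (b_i − δ)/b_1. Then for all i ≥ 0, b_{i+1} = b_1^{1−i} − δ·b_1^{-1}·(b_1^{-i} − 1)/(b_1^{-1} − 1), and the minimal i with b_i ≤ δ satisfies i ≥ log(1 − δ^{-1}(b_1 − b_1²))/log(b_1). -/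
/-!
With `x = b₁` the recursion is affine with fixed point `δ / (1 - x)`, which equals `1 + x` because
`δ = 1 - x²`. Hence `b_n = 1 + x - x / xⁿ` (also for `n = 0`, since `b₀ = x² + δ = 1` is forced by
the first step). So `b_i ≤ δ = 1 - x²` means `xⁱ ≤ 1 / (1 + x)`, and `1 / (1 + x)` is exactly
`1 - δ⁻¹ (x - x²)`; taking logarithms, with `log x < 0`, gives the bound on `i`.
-/

open Real

theorem affine_rec_sub_eq_div_pow {x δ : ℝ} {b : ℕ → ℝ} (hx0 : x ≠ 0) (hx1 : x ≠ 1)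
    (hrec : ∀ n, b (n + 1) = (b n - δ) / x) (n : ℕ) :
    b n - δ / (1 - x) = (b 0 - δ / (1 - x)) / x ^ n := by
  have h1x : 1 - x ≠ 0 := sub_ne_zero.mpr (Ne.symm hx1)
  induction n with
  | zero => simp
  | succ n ih =>
    rw [pow_succ, ← div_div, ← ih, hrec]
    field_simp
    ring

theorem log_div_log_le_of_pow_le {x a : ℝ} {n : ℕ} (hx0 : 0 < x) (hx1 : x < 1) (h : x ^ n ≤ a) :
    log a / log x ≤ n := by
  rw [div_le_iff_of_neg (log_neg hx0 hx1), ← log_pow]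
  exact log_le_log (pow_pos hx0 n) h

theorem eq_one_add_sub_div_pow_of_sq_eq {x δ : ℝ} {b : ℕ → ℝ} (hx0 : x ≠ 0) (hx1 : x ≠ 1)
    (hxsq : x ^ 2 = 1 - δ) (hbx : b 1 = x) (hrec : ∀ n, b (n + 1) = (b n - δ) / x) (n : ℕ) :
    b n = 1 + x - x / x ^ n := by
  have hb0 : b 0 = 1 := by
    have h := hrec 0
    rw [zero_add, hbx, eq_div_iff hx0] at h
    linear_combination -h + hxsq
  have hfix : δ / (1 - x) = 1 + x := by
    rw [div_eq_iff (sub_ne_zero.mpr (Ne.symm hx1))]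
    linear_combination hxsq
  have h := affine_rec_sub_eq_div_pow hx0 hx1 hrec n
  rw [hfix, hb0] at h
  linear_combination h

theorem bracket_recursion_general (δ : ℝ) (hδ0 : 0 < δ) (hδ1 : δ < 1)
    (b : ℕ → ℝ) (hb1 : b 1 = Real.sqrt (1 - δ))
    (hrec : ∀ i : ℕ, b (i + 1) = (b i - δ) / b 1) :
    (∀ i : ℕ, b (i + 1) =
        b 1 ^ ((1 : ℤ) - (i : ℤ)) -
          δ * (b 1)⁻¹ * ((b 1 ^ (-(i : ℤ)) - 1) / ((b 1)⁻¹ - 1))) ∧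
    (∀ i : ℕ, b i ≤ δ → (∀ m : ℕ, m < i → ¬ b m ≤ δ) →
      (i : ℝ) ≥ Real.log (1 - δ⁻¹ * (b 1 - b 1 ^ 2)) / Real.log (b 1)) := by
  set x := b 1
  have hx0 : 0 < x := by rw [hb1]; exact sqrt_pos.mpr (by linarith)
  have hxsq : x ^ 2 = 1 - δ := by rw [hb1, sq_sqrt (by linarith)]
  have hx1 : x < 1 := by nlinarith
  have hb := eq_one_add_sub_div_pow_of_sq_eq hx0.ne' hx1.ne hxsq rfl hrec
  refine ⟨fun i ↦ ?_, fun i hi _ ↦ ?_⟩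
  · have h1x : 1 - x ≠ 0 := by linarith
    rw [hb, zpow_sub₀ hx0.ne', zpow_neg, zpow_one, zpow_natCast]
    field_simp
    linear_combination x ^ (i + 1) * (1 - x ^ i) * hxsq
  · have harg : 1 - δ⁻¹ * (x - x ^ 2) = 1 / (1 + x) := by
      field_simp
      linear_combination x * hxsq
    have hpow : x ^ i * (1 + x) ≤ 1 := by
      have hxi : x * (1 + x) ≤ x / x ^ i := by linarith [hb i]
      rw [le_div_iff₀ (pow_pos hx0 i)] at hxi
      nlinarith
    rw [harg]
    apply log_div_log_le_of_pow_le hx0 hx1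
    rwa [le_div_iff₀ (by linarith)]

/-- The recursion `b₀ = 1`, `b_{i+1} = (b_i - δ)/b₁` with `b₁ = √(1-δ)` has the
closed form `b_{i+1} = b₁^{1-i} - δ b₁⁻¹ (b₁^{-i} - 1)/(b₁⁻¹ - 1)`, and any `i`
with `b_i ≤ δ` (in particular the minimal one) satisfies
`i ≥ log(1 - δ⁻¹(b₁ - b₁²))/log(b₁)`. -/
theorem bracket_recursion (δ : ℝ) (hδ0 : 0 < δ) (hδ1 : δ < 1)
    (b : ℕ → ℝ) (hb0 : b 0 = 1) (hb1 : b 1 = Real.sqrt (1 - δ))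
    (hrec : ∀ i : ℕ, b (i + 1) = (b i - δ) / b 1) :
    (∀ i : ℕ, b (i + 1) =
        b 1 ^ ((1 : ℤ) - (i : ℤ)) -
          δ * (b 1)⁻¹ * ((b 1 ^ (-(i : ℤ)) - 1) / ((b 1)⁻¹ - 1))) ∧
    (∀ i : ℕ, b i ≤ δ → (∀ m : ℕ, m < i → ¬ b m ≤ δ) →
      (i : ℝ) ≥ Real.log (1 - δ⁻¹ * (b 1 - b 1 ^ 2)) / Real.log (b 1)) :=
  bracket_recursion_general δ hδ0 hδ1 b hb1 hrec
end
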